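/- arXiv:2207.03566 — 3 statements merged into one kernel-verified Lean document; each statement's English description precedes it below -/
import Mathlib

section
/- Let a, b, η, λ1, λ2 > 0 with η < b, and let t0 ∈ ℝ. Suppose {t_i}_{i≥0} is a strictly increasing sequence with t_i ≤ t̄ < ∞ for all i, satisfying a·e^{-b(t_{i+1}-t0)} ≤ λ1·(e^{-η(t_i-t0)} − e^{-η(t_{i+1}-t0)}) + λ2·(t_{i+1}-t_i)·e^{-η(t_i-t0)} for all i. Then there exists T* > 0 such that t_{i+1} − t_i > T* for all i; in particular no such bounded strictly increasing sequence exists (contradiction), so any sequence satisfying the inequality must be unbounded. -/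
open Real

theorem stmt8 (a b η l1 l2 t0 tbar : ℝ) (ha : 0 < a) (hb : 0 < b) (hη : 0 < η)
    (hl1 : 0 < l1) (hl2 : 0 < l2) (hηb : η < b)
    (t : ℕ → ℝ) (hmono : StrictMono t) (h0 : t0 ≤ t 0)
    (hbd : ∀ i, t i ≤ tbar)
    (hineq : ∀ i : ℕ,
      a * Real.exp (-b * (t (i + 1) - t0)) ≤
        l1 * (Real.exp (-η * (t i - t0)) - Real.exp (-η * (t (i + 1) - t0))) +
        l2 * (t (i + 1) - t i) * Real.exp (-η * (t i - t0))) :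
    (∃ Tstar > (0:ℝ), ∀ i : ℕ, Tstar < t (i + 1) - t i) ∧ False := by
  set C := Real.exp ((η - b) * (tbar - t0)) with hC
  have hCpos : 0 < C := Real.exp_pos _
  set D := a * C * b + l1 * η + l2 with hD
  have hDpos : 0 < D := by positivity
  set T0 := a * C / D with hT0
  have hT0pos : 0 < T0 := by positivity
  have key : ∀ i, T0 ≤ t (i + 1) - t i := by
    intro i
    set T := t (i + 1) - t i with hT
    have hTpos : 0 < T := sub_pos.mpr (hmono (Nat.lt_succ_self i))
    have hti : t0 ≤ t i := le_trans h0 (hmono.monotone (Nat.zero_le i))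
    set K := Real.exp ((η - b) * (t i - t0)) with hK
    set E := Real.exp (-η * (t i - t0)) with hE
    have hEpos : 0 < E := Real.exp_pos _
    have hKpos : 0 < K := Real.exp_pos _
    have e1 : Real.exp (-b * (t (i + 1) - t0)) = Real.exp (-b * T) * K * E := by
      rw [hK, hE, ← Real.exp_add, ← Real.exp_add]
      congr 1
      have : t (i + 1) = t i + T := by rw [hT]; ring
      rw [this]; ring
    have e2 : Real.exp (-η * (t (i + 1) - t0)) = Real.exp (-η * T) * E := by
      rw [hE, ← Real.exp_add]
      congr 1
      have : t (i + 1) = t i + T := by rw [hT]; ring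
      rw [this]; ring
    have h1 := hineq i
    rw [e1, e2] at h1
    -- divide by E
    have h2 : a * Real.exp (-b * T) * K ≤ l1 * (1 - Real.exp (-η * T)) + l2 * T := by
      have := mul_le_mul_of_nonneg_right h1 (le_of_lt (inv_pos.mpr hEpos))
      have hEne : E ≠ 0 := ne_of_gt hEpos
      calc a * Real.exp (-b * T) * K
          = (a * (Real.exp (-b * T) * K * E)) * E⁻¹ := by field_simp
        _ ≤ (l1 * (E - Real.exp (-η * T) * E) + l2 * (t (i+1) - t i) * E) * E⁻¹ := this
        _ = l1 * (1 - Real.exp (-η * T)) + l2 * T := by rw [← hT]; field_simp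
    have hCK : C ≤ K := by
      apply Real.exp_le_exp.mpr
      apply mul_le_mul_of_nonpos_left _ (by linarith : η - b ≤ 0)
      have := hbd i
      linarith
    have hexpb : 0 < Real.exp (-b * T) := Real.exp_pos _
    have h3 : a * C * Real.exp (-b * T) ≤ l1 * (1 - Real.exp (-η * T)) + l2 * T := by
      have hstep : a * Real.exp (-b * T) * C ≤ a * Real.exp (-b * T) * K :=
        mul_le_mul_of_nonneg_left hCK (by positivity)
      calc a * C * Real.exp (-b * T) = a * Real.exp (-b * T) * C := by ring
        _ ≤ a * Real.exp (-b * T) * K := hstep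
        _ ≤ _ := h2
    have hlin1 : 1 - Real.exp (-η * T) ≤ η * T := by
      have := Real.add_one_le_exp (-η * T)
      linarith
    have hlin2 : 1 - b * T ≤ Real.exp (-b * T) := by
      have := Real.add_one_le_exp (-b * T)
      linarith
    have h4 : a * C * (1 - b * T) ≤ l1 * (η * T) + l2 * T := by
      have hl1T : l1 * (1 - Real.exp (-η * T)) ≤ l1 * (η * T) :=
        mul_le_mul_of_nonneg_left hlin1 (le_of_lt hl1)
      have hstep2 : a * C * (1 - b * T) ≤ a * C * Real.exp (-b * T) :=
        mul_le_mul_of_nonneg_left hlin2 (by positivity)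
      linarith
    have h5 : a * C ≤ D * T := by rw [hD]; nlinarith
    rw [hT0]
    exact (div_le_iff₀ hDpos).mpr (by linarith [h5])
  have hgrow : ∀ n : ℕ, t 0 + n * T0 ≤ t n := by
    intro n
    induction n with
    | zero => simp
    | succ n ih =>
      have := key n
      push_cast
      linarith
  obtain ⟨n, hn⟩ := exists_nat_gt ((tbar - t 0) / T0)
  have hn' : tbar - t 0 < n * T0 := (div_lt_iff₀ hT0pos).mp hn
  have hFalse : False := by
    have := hgrow n
    have := hbd n
    linarith
  exact hFalse.elim
end

section
/- Let η, λ > 0, L1 > 0, M̄ > 0, and let α: [0,∞) → [0,∞) be strictly increasing continuous with α(0)=0 (class K∞). Suppose for every initial size c > 0 there is a bound x(t) ≤ min{ c·e^{λ(t-t0)}, L1·M(c)·e^{-η(t-t0)} } where M(c) = β(c) + M̄ with β: [0,∞)→[0,∞) continuous increasing with β(0)=0. Then for every ε > 0 there exists δ > 0 such that c < δ implies x(t) < ε for all t ≥ t0. -/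
open Set Filter Topology

/-- Crossing-time argument: the decaying envelope drops below `ε` after some time `T`, and before
`T` the growing envelope stays below `ε` as soon as its initial size is below `ε e^{-λT}`. -/
theorem exists_pos_forall_min_exp_lt {lam η : ℝ} (hlam : 0 ≤ lam) (hη : 0 < η) (K : ℝ)
    {ε : ℝ} (hε : 0 < ε) :
    ∃ δ > 0, ∀ c < δ, ∀ τ, min (c * Real.exp (lam * τ)) (K * Real.exp (-η * τ)) < ε := by
  have hdecay : Tendsto (fun τ => K * Real.exp (-η * τ)) atTop (𝓝 0) := by
    simpa using (Real.tendsto_exp_neg_atTop_nhds_zero.comp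
      (tendsto_id.const_mul_atTop hη)).const_mul K
  obtain ⟨T, hT⟩ := eventually_atTop.mp (hdecay.eventually (gt_mem_nhds hε))
  refine ⟨ε * Real.exp (-lam * T), by positivity, fun c hc τ => ?_⟩
  rcases le_or_gt T τ with hTτ | hτT
  · exact (min_le_right _ _).trans_lt (hT τ hTτ)
  · calc min (c * Real.exp (lam * τ)) (K * Real.exp (-η * τ))
        ≤ c * Real.exp (lam * τ) := min_le_left _ _
      _ < ε * Real.exp (-lam * T) * Real.exp (lam * τ) := by gcongr
      _ = ε * Real.exp (lam * (τ - T)) := by rw [mul_assoc, ← Real.exp_add]; ring_nf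
      _ ≤ ε * 1 := by gcongr; exact Real.exp_le_one_iff.mpr (by nlinarith)
      _ = ε := mul_one ε

theorem stmt10_general (η lam L1 Mbar t0 : ℝ) (hη : 0 < η) (hlam : 0 < lam)
    (hL1 : 0 < L1)
    (β : ℝ → ℝ) (hβm : MonotoneOn β (Ici 0))
    (x : ℝ → ℝ → ℝ)
    (hb : ∀ c, 0 < c → ∀ t, t0 ≤ t →
      x c t ≤ min (c * Real.exp (lam * (t - t0)))
        (L1 * (β c + Mbar) * Real.exp (-η * (t - t0)))) :
    ∀ ε > (0:ℝ), ∃ δ > (0:ℝ), ∀ c, 0 < c → c < δ →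
      ∀ t, t0 ≤ t → x c t < ε := by
  intro ε hε
  obtain ⟨δ, hδ, hδε⟩ := exists_pos_forall_min_exp_lt hlam.le hη (L1 * (β 1 + Mbar)) hε
  refine ⟨min 1 δ, lt_min one_pos hδ, fun c hc hcδ t ht => ?_⟩
  have hβc : β c ≤ β 1 :=
    hβm (mem_Ici.mpr hc.le) (mem_Ici.mpr zero_le_one) (hcδ.le.trans (min_le_left _ _))
  calc x c t ≤ min (c * Real.exp (lam * (t - t0)))
        (L1 * (β c + Mbar) * Real.exp (-η * (t - t0))) := hb c hc t ht
    _ ≤ min (c * Real.exp (lam * (t - t0)))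
        (L1 * (β 1 + Mbar) * Real.exp (-η * (t - t0))) := by gcongr
    _ < ε := hδε c (hcδ.trans_le (min_le_right _ _)) (t - t0)

theorem stmt10 (η lam L1 Mbar t0 : ℝ) (hη : 0 < η) (hlam : 0 < lam)
    (hL1 : 0 < L1) (hM : 0 < Mbar)
    (α : ℝ → ℝ) (hαc : ContinuousOn α (Ici 0)) (hαm : StrictMonoOn α (Ici 0))
    (hα0 : α 0 = 0) (hαtop : Tendsto α atTop atTop)
    (β : ℝ → ℝ) (hβc : ContinuousOn β (Ici 0)) (hβm : MonotoneOn β (Ici 0))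
    (hβ0 : β 0 = 0) (hβnn : ∀ s, 0 ≤ s → 0 ≤ β s)
    (x : ℝ → ℝ → ℝ)
    (hxnn : ∀ c, 0 < c → ∀ t, t0 ≤ t → 0 ≤ x c t)
    (hb : ∀ c, 0 < c → ∀ t, t0 ≤ t →
      x c t ≤ min (c * Real.exp (lam * (t - t0)))
        (L1 * (β c + Mbar) * Real.exp (-η * (t - t0)))) :
    ∀ ε > (0:ℝ), ∃ δ > (0:ℝ), ∀ c, 0 < c → c < δ →
      ∀ t, t0 ≤ t → x c t < ε :=
  stmt10_general η lam L1 Mbar t0 hη hlam hL1 β hβm x hb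
end

section
/- Let V1: ℝ² → [0,∞) be V1(x) = x1² + x2² and V2(t) = δ·∫_{t-1}^{t} e^{-ζ(t-s)}·(x1(s)² + x2(s)²) ds with δ = 0.4, ζ = 0.28. Along solutions of ẋ1 = x2 + x1²x2 − x1 − ε1, ẋ2 = −x1 − 0.5·x2 − 0.3·x1(t−1) − x1³, the functional V = V1 + V2 satisfies dV/dt ≤ −0.28·V + ε1² for all t (where ε1 = ε1(t) is the sampling error on the first coordinate). -/
theorem stmt18 (x1 x2 ε1 : ℝ → ℝ) (hx1 : Continuous x1) (hx2 : Continuous x2)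
    (hode1 : ∀ t, HasDerivAt x1 (x2 t + (x1 t)^2 * x2 t - x1 t - ε1 t) t)
    (hode2 : ∀ t, HasDerivAt x2
      (-(x1 t) - 0.5 * x2 t - 0.3 * x1 (t - 1) - (x1 t)^3) t)
    (V : ℝ → ℝ)
    (hV : V = fun t => (x1 t)^2 + (x2 t)^2 +
      0.4 * ∫ s in (t - 1)..t, Real.exp (-0.28 * (t - s)) * ((x1 s)^2 + (x2 s)^2)) :
    ∀ t d : ℝ, HasDerivAt V d t → d ≤ -0.28 * V t + (ε1 t)^2 := by
  intro t d hd
  set f : ℝ → ℝ := fun s => (x1 s)^2 + (x2 s)^2 with hf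
  have hfc : Continuous f := by fun_prop
  set g : ℝ → ℝ := fun s => Real.exp (0.28*s) * f s with hg
  have hgc : Continuous g := by fun_prop
  set H : ℝ → ℝ := fun u => ∫ s in (0:ℝ)..u, g s with hH
  have hHd : ∀ u : ℝ, HasDerivAt H (g u) u := fun u =>
    (hgc.integral_hasStrictDerivAt 0 u).hasDerivAt
  have hVeq : V = fun u => f u + 0.4 * (Real.exp (-0.28*u) * (H u - H (u-1))) := by
    rw [hV]
    funext u
    have h1 : ∀ s, Real.exp (-0.28*(u-s)) * ((x1 s)^2 + (x2 s)^2)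
        = Real.exp (-0.28*u) * g s := by
      intro s
      rw [hg]
      rw [show (-0.28:ℝ)*(u-s) = -0.28*u + 0.28*s by ring, Real.exp_add]
      ring
    simp only [h1]
    rw [intervalIntegral.integral_const_mul]
    have h2 : H u - H (u-1) = ∫ s in (u-1)..u, g s := by
      rw [hH]
      exact intervalIntegral.integral_interval_sub_left
        (hgc.intervalIntegrable 0 u) (hgc.intervalIntegrable 0 (u-1))
    rw [h2]
  subst hVeq
  -- compute the derivative of V
  have hfd : HasDerivAt f
      (2 * x1 t * (x2 t + (x1 t)^2 * x2 t - x1 t - ε1 t)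
        + 2 * x2 t * (-(x1 t) - 0.5 * x2 t - 0.3 * x1 (t - 1) - (x1 t)^3)) t := by
    have h1 := (hode1 t).fun_pow 2
    have h2 := (hode2 t).fun_pow 2
    have : HasDerivAt f _ t := h1.fun_add h2
    convert this using 1
    ring
  have hexp : HasDerivAt (fun u => Real.exp (-0.28*u))
      (Real.exp (-0.28*t) * (-0.28)) t := by
    have hinner : HasDerivAt (fun u : ℝ => -0.28*u) (-0.28) t := by
      simpa using (hasDerivAt_id t).const_mul (-0.28 : ℝ)
    exact hinner.exp
  have hH1 : HasDerivAt (fun u => H (u - 1)) (g (t-1)) t := by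
    have := (hHd (t-1)).comp t ((hasDerivAt_id t).sub_const 1)
    simpa using (hHd (t-1)).comp_sub_const t 1
  have hdiff : HasDerivAt (fun u => H u - H (u-1)) (g t - g (t-1)) t :=
    (hHd t).sub hH1
  have hprod : HasDerivAt (fun u => Real.exp (-0.28*u) * (H u - H (u-1)))
      (Real.exp (-0.28*t) * (-0.28) * (H t - H (t-1))
        + Real.exp (-0.28*t) * (g t - g (t-1))) t := hexp.mul hdiff
  have hVd : HasDerivAt (fun u => f u + 0.4 * (Real.exp (-0.28*u) * (H u - H (u-1))))
      (2 * x1 t * (x2 t + (x1 t)^2 * x2 t - x1 t - ε1 t)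
        + 2 * x2 t * (-(x1 t) - 0.5 * x2 t - 0.3 * x1 (t - 1) - (x1 t)^3)
        + 0.4 * (Real.exp (-0.28*t) * (-0.28) * (H t - H (t-1))
          + Real.exp (-0.28*t) * (g t - g (t-1)))) t :=
    hfd.add (hprod.const_mul 0.4)
  have hdeq := hd.unique hVd
  -- simplify exp products
  have e1 : Real.exp (-0.28*t) * g t = f t := by
    rw [hg]
    rw [show Real.exp (-0.28*t) * (Real.exp (0.28*t) * f t)
        = Real.exp (-0.28*t + 0.28*t) * f t by rw [Real.exp_add]; ring]
    norm_num
  have e2 : Real.exp (-0.28*t) * g (t-1) = Real.exp (-0.28) * f (t-1) := by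
    rw [hg]
    rw [show Real.exp (-0.28*t) * (Real.exp (0.28*(t-1)) * f (t-1))
        = Real.exp (-0.28*t + 0.28*(t-1)) * f (t-1) by rw [Real.exp_add]; ring]
    rw [show (-0.28*t + 0.28*(t-1) : ℝ) = -0.28 by ring]
  -- bound exp(-0.28) ≥ 0.75
  have hexpb : (0.75:ℝ) ≤ Real.exp (-0.28) := by
    have h35 : (0.965:ℝ) ≤ Real.exp (-0.035) := by
      nlinarith [Real.add_one_le_exp (-0.035:ℝ)]
    have : ((0.965:ℝ))^8 ≤ (Real.exp (-0.035))^8 := by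
      apply pow_le_pow_left₀ (by norm_num) h35
    have h8 : (Real.exp (-0.035))^8 = Real.exp (-0.28) := by
      rw [← Real.exp_nat_mul]; norm_num
    nlinarith [this, h8]
  have hft : f t = (x1 t)^2 + (x2 t)^2 := rfl
  have hft1 : f (t-1) = (x1 (t-1))^2 + (x2 (t-1))^2 := rfl
  rw [hdeq]
  have key : 2 * x1 t * (x2 t + (x1 t)^2 * x2 t - x1 t - ε1 t)
        + 2 * x2 t * (-(x1 t) - 0.5 * x2 t - 0.3 * x1 (t - 1) - (x1 t)^3)
        + 0.4 * (Real.exp (-0.28*t) * (-0.28) * (H t - H (t-1))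
          + (f t - Real.exp (-0.28) * f (t-1)))
      ≤ -0.28 * (f t + 0.4 * (Real.exp (-0.28*t) * (H t - H (t-1)))) + (ε1 t)^2 := by
    rw [hft, hft1]
    nlinarith [sq_nonneg (x1 t + ε1 t), sq_nonneg (x2 t + x1 (t-1)), sq_nonneg (x1 t),
      sq_nonneg (x2 t), sq_nonneg (x1 (t-1)), sq_nonneg (x2 (t-1)), hexpb]
  calc 2 * x1 t * (x2 t + (x1 t)^2 * x2 t - x1 t - ε1 t)
        + 2 * x2 t * (-(x1 t) - 0.5 * x2 t - 0.3 * x1 (t - 1) - (x1 t)^3)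
        + 0.4 * (Real.exp (-0.28*t) * (-0.28) * (H t - H (t-1))
          + Real.exp (-0.28*t) * (g t - g (t-1)))
      = 2 * x1 t * (x2 t + (x1 t)^2 * x2 t - x1 t - ε1 t)
        + 2 * x2 t * (-(x1 t) - 0.5 * x2 t - 0.3 * x1 (t - 1) - (x1 t)^3)
        + 0.4 * (Real.exp (-0.28*t) * (-0.28) * (H t - H (t-1))
          + (f t - Real.exp (-0.28) * f (t-1))) := by
        rw [show Real.exp (-0.28*t) * (g t - g (t-1))
          = Real.exp (-0.28*t) * g t - Real.exp (-0.28*t) * g (t-1) by ring, e1, e2]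
    _ ≤ _ := key
end
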